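/- arXiv:0905.1049 — 4 statements merged into one kernel-verified Lean document; each statement's English description precedes it below -/
import Mathlib

section
/- For all u, v, w, x in the free nonunitary associative algebra k₀⟨X⟩ over a field k, one has [u,v]·[w,x] ≡ −[u,w]·[v,x] (mod T⁽³⁾) and [u,v]·[u,w] ≡ 0 (mod T⁽³⁾). -/
noncomputable section

/-- The ring commutator `[a,b] = a*b - b*a`. -/
def ringComm {A : Type*} [Ring A] (a b : A) : A := a * b - b * a

variable (k : Type*) [Field k]

/-- The free unitary associative `k`-algebra `k⟨X⟩` on countably many generators. -/
abbrev F : Type _ := FreeAlgebra k ℕ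

/-- The generator `x_{i+1}`: we index the variables from `0`, so `X k i` is the
variable `x_{i+1}` of the paper. -/
def X (i : ℕ) : F k := FreeAlgebra.ι k i

/-- `k₀⟨X⟩`, the free nonunitary associative algebra: the non-unital subalgebra of
`k⟨X⟩` generated by the variables, i.e. the polynomials with zero constant term. -/
def A0 : NonUnitalSubalgebra k (F k) := NonUnitalAlgebra.adjoin k (Set.range (FreeAlgebra.ι k))

/-- `T⁽³⁾`: the two-sided (non-unital) ideal of `k₀⟨X⟩` generated — including the
generators themselves — by all `[[u,v],w]` with `u,v,w ∈ k₀⟨X⟩`. -/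
def T3 : Submodule k (F k) := Submodule.span k
  {x | ∃ u ∈ A0 k, ∃ v ∈ A0 k, ∃ w ∈ A0 k,
    x = ringComm (ringComm u v) w ∨
    (∃ a ∈ A0 k, x = a * ringComm (ringComm u v) w) ∨
    (∃ b ∈ A0 k, x = ringComm (ringComm u v) w * b) ∨
    (∃ a ∈ A0 k, ∃ b ∈ A0 k, x = a * ringComm (ringComm u v) w * b)}

lemma gen_mem (u : F k) (hu : u ∈ A0 k) (v : F k) (hv : v ∈ A0 k) (w : F k)
    (hw : w ∈ A0 k) : ringComm (ringComm u v) w ∈ T3 k :=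
  Submodule.subset_span ⟨u, hu, v, hv, w, hw, Or.inl rfl⟩

lemma mul_gen_mem (a : F k) (ha : a ∈ A0 k) (u : F k) (hu : u ∈ A0 k) (v : F k)
    (hv : v ∈ A0 k) (w : F k) (hw : w ∈ A0 k) :
    a * ringComm (ringComm u v) w ∈ T3 k :=
  Submodule.subset_span ⟨u, hu, v, hv, w, hw, Or.inr (Or.inl ⟨a, ha, rfl⟩)⟩

lemma gen_mul_mem (b : F k) (hb : b ∈ A0 k) (u : F k) (hu : u ∈ A0 k) (v : F k)
    (hv : v ∈ A0 k) (w : F k) (hw : w ∈ A0 k) :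
    ringComm (ringComm u v) w * b ∈ T3 k :=
  Submodule.subset_span ⟨u, hu, v, hv, w, hw, Or.inr (Or.inr (Or.inl ⟨b, hb, rfl⟩))⟩

lemma key_mem (u : F k) (hu : u ∈ A0 k) (v : F k) (hv : v ∈ A0 k) (w : F k)
    (hw : w ∈ A0 k) (x : F k) (hx : x ∈ A0 k) :
    ringComm u v * ringComm w x + ringComm u w * ringComm v x ∈ T3 k := by
  have hE : ringComm u v * ringComm w x + ringComm u w * ringComm v x =
      ringComm (ringComm u (v * w)) x - ringComm (ringComm u v) x * w
        - v * ringComm (ringComm u w) x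
        - ringComm (ringComm v x) (u * w - w * u) := by
    simp only [ringComm]; noncomm_ring
  rw [hE]
  have huw : u * w - w * u ∈ A0 k := sub_mem (mul_mem hu hw) (mul_mem hw hu)
  exact sub_mem (sub_mem (sub_mem
    (gen_mem k u hu (v * w) (mul_mem hv hw) x hx)
    (gen_mul_mem k w hw u hu v hv x hx))
    (mul_gen_mem k v hv u hu w hw x hx))
    (gen_mem k v hv x hx _ huw)

/-- For all u, v, w, x in the free nonunitary associative algebra k₀⟨X⟩ over a field k,
[u,v]·[w,x] ≡ −[u,w]·[v,x] (mod T⁽³⁾) and [u,v]·[u,w] ≡ 0 (mod T⁽³⁾). -/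
theorem statement0 :
    ∀ u ∈ A0 k, ∀ v ∈ A0 k, ∀ w ∈ A0 k, ∀ x ∈ A0 k,
      ringComm u v * ringComm w x - (-(ringComm u w * ringComm v x)) ∈ T3 k ∧
      ringComm u v * ringComm u w - 0 ∈ T3 k := by
  intro u hu v hv w hw x hx
  constructor
  · have := key_mem k u hu v hv w hw x hx
    rwa [sub_neg_eq_add]
  · have := key_mem k u hu v hv u hu w hw
    have h0 : ringComm u u = 0 := by simp [ringComm]
    rw [h0, zero_mul, add_zero] at this
    rwa [sub_zero]

end
end

section
/- For every integer n ≥ 2, in the free associative algebra one has x₁ⁿx₂ⁿ ≡ (x₁x₂)ⁿ + C(n,2)·[x₁,x₂]·x₁ⁿ⁻¹x₂ⁿ⁻¹ (mod T⁽³⁾), where C(n,2) = n(n−1)/2 is a binomial coefficient (interpreted in k). -/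
noncomputable section

section General
variable {R : Type*} [Ring R]

theorem comm_sq (H : ∀ a b z : R, (a*b - b*a) * z = z * (a*b - b*a)) (x y : R) :
    (x*y - y*x) * (x*y - y*x) = 0 := by
  linear_combination (norm := noncomm_ring) H x (y*x) y - H x y y * x

theorem lemM (H : ∀ a b z : R, (a*b - b*a) * z = z * (a*b - b*a)) (x y : R) :
    ∀ n : ℕ, x * (x*y)^(n+1) =
      (x*y)^(n+1) * x + ((n:R)+1) * ((x*y - y*x) * ((x*y)^n * x))
  | 0 => by
    push_cast
    linear_combination (norm := noncomm_ring) - H x y x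
  | (n+1) => by
    have IH := lemM H x y n
    have hb : x * (x*y) = (x*y)*x + (x*y - y*x)*x := by
      linear_combination (norm := noncomm_ring) - H x y x
    push_cast
    linear_combination (norm := noncomm_ring)
      IH * (x*y) + ((x*y)^n*(x*y)) * hb
      + ((n:R)+1) * ((x*y - y*x) * ((x*y)^n * hb))
      - (H x y ((x*y)^n*(x*y))) * x
      - ((n:R)+1) * ((x*y - y*x) * ((H x y ((x*y)^n)) * x))
      + ((n:R)+1) * ((comm_sq H x y) * ((x*y)^n * x))

theorem lemP (H : ∀ a b z : R, (a*b - b*a) * z = z * (a*b - b*a)) (x y : R) :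
    ∀ m : ℕ, x^(m+2) * y^(m+2) =
      (x*y)^(m+2) + (((m+2).choose 2 : ℕ) : R) * ((x*y - y*x) * (x^(m+1) * y^(m+1)))
  | 0 => by
    norm_num
    linear_combination (norm := noncomm_ring) - H x y x * y
  | (m+1) => by
    have IH := lemP H x y m
    have hM := lemM H x y (m+1)
    have hcc := comm_sq H x y
    have hx1 : x^(m+1)*x = x*x^(m+1) := by rw [← pow_succ, pow_succ']
    have hx2 : x^(m+2)*x = x*x^(m+2) := by rw [← pow_succ, pow_succ']
    have hKx : (((m+2).choose 2 : ℕ) : R) * x = x * (((m+2).choose 2 : ℕ) : R) :=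
      (Nat.cast_commute _ _).eq
    have hKc : (((m+2).choose 2 : ℕ) : R) * (x*y - y*x) = (x*y - y*x) * (((m+2).choose 2 : ℕ) : R) :=
      (Nat.cast_commute _ _).eq
    have s1 : (x*y - y*x) * (x^(m+2)*y^(m+2)) = (x*y - y*x) * (x*y)^(m+2) := by
      linear_combination (norm := noncomm_ring)
        (x*y - y*x) * IH - hKc * ((x*y - y*x)*(x^(m+1)*y^(m+1)))
        + (((m+2).choose 2 : ℕ):R) * (hcc * (x^(m+1)*y^(m+1)))
    have s2 : x * (x^(m+2)*y^(m+2)) * y = x^(m+3) * y^(m+3) := by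
      linear_combination (norm := noncomm_ring) - hx2 * (y^(m+2)*y)
    have s3 : x * ((x*y)^(m+2)) * y = (x*y)^(m+3) + ((m:R)+2) * ((x*y - y*x) * ((x*y)^(m+2))) := by
      push_cast at hM
      linear_combination (norm := noncomm_ring) hM * y
    have s4 : x * ((((m+2).choose 2 : ℕ):R) * ((x*y - y*x) * (x^(m+1)*y^(m+1)))) * y
        = (((m+2).choose 2 : ℕ):R) * ((x*y - y*x) * (x^(m+2)*y^(m+2))) := by
      linear_combination (norm := noncomm_ring)
        - hKx * ((x*y - y*x) * ((x^(m+1)*y^(m+1)) * y))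
        - (((m+2).choose 2 : ℕ):R) * (H x y x * ((x^(m+1)*y^(m+1)) * y))
        - (((m+2).choose 2 : ℕ):R) * ((x*y - y*x) * (hx1 * (y^(m+1)*y)))
    have hKn : ((m+1+2).choose 2 : ℕ) = ((m+2).choose 2) + (m+2) := by
      rw [Nat.choose_succ_succ, Nat.choose_one_right, Nat.add_comm]
    rw [hKn]
    push_cast
    linear_combination (norm := noncomm_ring)
      - s2 + x * IH * y + s3 + s4 - ((m:R)+2) * s1
end General

variable (k : Type*) [Field k]

theorem decomp (a : F k) : ∃ s : k, a - algebraMap k (F k) s ∈ A0 k := by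
  induction a using FreeAlgebra.induction with
  | grade0 r => exact ⟨r, by rw [sub_self]; exact zero_mem _⟩
  | grade1 i => exact ⟨0, by simpa [A0] using NonUnitalAlgebra.subset_adjoin k (Set.mem_range_self i)⟩
  | add a b ha hb =>
      obtain ⟨s, hs⟩ := ha; obtain ⟨t, ht⟩ := hb
      exact ⟨s + t, by simpa [map_add, add_sub_add_comm] using add_mem hs ht⟩
  | mul a b ha hb =>
      obtain ⟨s, hs⟩ := ha; obtain ⟨t, ht⟩ := hb
      refine ⟨s * t, ?_⟩
      have key : a * b - algebraMap k (F k) (s * t)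
          = (a - algebraMap k (F k) s) * (b - algebraMap k (F k) t)
            + s • (b - algebraMap k (F k) t) + t • (a - algebraMap k (F k) s) := by
        have h1 : algebraMap k (F k) t * a = a * algebraMap k (F k) t := Algebra.commutes t a
        have h2 : algebraMap k (F k) t * algebraMap k (F k) s
            = algebraMap k (F k) s * algebraMap k (F k) t := by
          rw [← map_mul, ← map_mul, mul_comm]
        rw [Algebra.smul_def, Algebra.smul_def, map_mul]
        linear_combination (norm := noncomm_ring) - h1 + h2
      rw [key]
      exact add_mem (add_mem (mul_mem hs ht) (SMulMemClass.smul_mem s ht))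
        (SMulMemClass.smul_mem t hs)

theorem T3_mul_left (a : F k) {t : F k} (ht : t ∈ T3 k) : a * t ∈ T3 k := by
  induction ht using Submodule.span_induction with
  | zero => simpa using (T3 k).zero_mem
  | add u v hu hv ihu ihv => rw [mul_add]; exact add_mem ihu ihv
  | smul r u hu ih => rw [mul_smul_comm]; exact Submodule.smul_mem _ _ ih
  | mem x hx =>
      obtain ⟨s, hs⟩ := decomp k a
      have hx' : x ∈ T3 k := Submodule.subset_span hx
      have key : a * x = (a - algebraMap k (F k) s) * x + s • x := by
        rw [Algebra.smul_def]; noncomm_ring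
      rw [key]
      refine add_mem ?_ (Submodule.smul_mem _ _ hx')
      set a₀ := a - algebraMap k (F k) s with ha₀
      obtain ⟨u, hu, v, hv, w, hw, hcase⟩ := hx
      refine Submodule.subset_span ⟨u, hu, v, hv, w, hw, ?_⟩
      rcases hcase with h | ⟨b, hb, h⟩ | ⟨b, hb, h⟩ | ⟨b1, hb1, b2, hb2, h⟩
      · exact Or.inr (Or.inl ⟨a₀, hs, by rw [h]⟩)
      · exact Or.inr (Or.inl ⟨a₀ * b, mul_mem hs hb, by rw [h, mul_assoc]⟩)
      · exact Or.inr (Or.inr (Or.inr ⟨a₀, hs, b, hb, by rw [h]; simp only [mul_assoc]⟩))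
      · exact Or.inr (Or.inr (Or.inr ⟨a₀ * b1, mul_mem hs hb1, b2, hb2, by
          rw [h]; simp only [mul_assoc]⟩))

theorem T3_mul_right (a : F k) {t : F k} (ht : t ∈ T3 k) : t * a ∈ T3 k := by
  induction ht using Submodule.span_induction with
  | zero => simpa using (T3 k).zero_mem
  | add u v hu hv ihu ihv => rw [add_mul]; exact add_mem ihu ihv
  | smul r u hu ih => rw [smul_mul_assoc]; exact Submodule.smul_mem _ _ ih
  | mem x hx =>
      obtain ⟨s, hs⟩ := decomp k a
      have hx' : x ∈ T3 k := Submodule.subset_span hx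
      have key : x * a = x * (a - algebraMap k (F k) s) + s • x := by
        rw [Algebra.smul_def, Algebra.commutes s x]; noncomm_ring
      rw [key]
      refine add_mem ?_ (Submodule.smul_mem _ _ hx')
      set a₀ := a - algebraMap k (F k) s with ha₀
      obtain ⟨u, hu, v, hv, w, hw, hcase⟩ := hx
      refine Submodule.subset_span ⟨u, hu, v, hv, w, hw, ?_⟩
      rcases hcase with h | ⟨b, hb, h⟩ | ⟨b, hb, h⟩ | ⟨b1, hb1, b2, hb2, h⟩
      · exact Or.inr (Or.inr (Or.inl ⟨a₀, hs, by rw [h]⟩))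
      · exact Or.inr (Or.inr (Or.inr ⟨b, hb, a₀, hs, by rw [h]⟩))
      · exact Or.inr (Or.inr (Or.inl ⟨b * a₀, mul_mem hb hs, by rw [h]; simp only [mul_assoc]⟩))
      · exact Or.inr (Or.inr (Or.inr ⟨b1, hb1, b2 * a₀, mul_mem hb2 hs, by
          rw [h]; simp only [mul_assoc]⟩))

theorem ringComm_reduce (u v : F k) (s t : k) :
    ringComm u v = ringComm (u - algebraMap k (F k) s) (v - algebraMap k (F k) t) := by
  have h1 := Algebra.commutes s v
  have h2 := Algebra.commutes t u
  have h3 : algebraMap k (F k) s * algebraMap k (F k) t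
      = algebraMap k (F k) t * algebraMap k (F k) s := by
    rw [← map_mul, ← map_mul, mul_comm]
  simp only [ringComm]
  linear_combination (norm := noncomm_ring) h1 - h2 - h3

theorem triple_mem (u v w : F k) : ringComm (ringComm u v) w ∈ T3 k := by
  obtain ⟨s, hs⟩ := decomp k u
  obtain ⟨t, ht⟩ := decomp k v
  obtain ⟨r, hr⟩ := decomp k w
  have e2 : ringComm (ringComm u v) w
      = ringComm (ringComm u v - algebraMap k (F k) 0) (w - algebraMap k (F k) r) :=
    ringComm_reduce k _ _ 0 r
  rw [e2, map_zero, sub_zero, ringComm_reduce k u v s t]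
  exact Submodule.subset_span ⟨_, hs, _, ht, _, hr, Or.inl rfl⟩

/-- The ring congruence on `k⟨X⟩` given by working modulo `T⁽³⁾`. -/
def rc : RingCon (F k) where
  r a b := a - b ∈ T3 k
  iseqv := {
    refl := fun a => by rw [sub_self]; exact zero_mem _
    symm := fun {a b} h => by rw [← neg_sub]; exact neg_mem h
    trans := fun {a b c} h1 h2 => by
      have := add_mem h1 h2; rwa [sub_add_sub_cancel] at this }
  add' := fun {a b c d} h1 h2 => by
    have h1' : a - b ∈ T3 k := h1
    have h2' : c - d ∈ T3 k := h2
    show (a + c) - (b + d) ∈ T3 k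
    have e : a + c - (b + d) = (a - b) + (c - d) := by abel
    rw [e]; exact add_mem h1' h2'
  mul' := fun {a b c d} h1 h2 => by
    have h1' : a - b ∈ T3 k := h1
    have h2' : c - d ∈ T3 k := h2
    show a * c - b * d ∈ T3 k
    have key : a * c - b * d = a * (c - d) + (a - b) * d := by noncomm_ring
    rw [key]; exact add_mem (T3_mul_left k a h2') (T3_mul_right k d h1')

theorem coe_triple_zero (u v w : F k) :
    ((ringComm (ringComm u v) w : F k) : (rc k).Quotient) = 0 := by
  have h : (rc k) (ringComm (ringComm u v) w) 0 := by
    show ringComm (ringComm u v) w - 0 ∈ T3 k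
    simpa using triple_mem k u v w
  rw [← RingCon.coe_zero (rc k)]
  exact ((rc k).eq).mpr h

theorem Hquot (a b z : (rc k).Quotient) : (a*b - b*a) * z = z * (a*b - b*a) := by
  obtain ⟨u, rfl⟩ := Quotient.mk''_surjective a
  obtain ⟨v, rfl⟩ := Quotient.mk''_surjective b
  obtain ⟨w, rfl⟩ := Quotient.mk''_surjective z
  have h := coe_triple_zero k u v w
  simp only [ringComm, RingCon.coe_sub, RingCon.coe_mul] at h
  exact sub_eq_zero.mp h

/-- For every integer n ≥ 2, x₁ⁿx₂ⁿ ≡ (x₁x₂)ⁿ + C(n,2)·[x₁,x₂]·x₁ⁿ⁻¹x₂ⁿ⁻¹ (mod T⁽³⁾),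
where the binomial coefficient C(n,2) is interpreted in k. -/
theorem statement1 (n : ℕ) (hn : 2 ≤ n) :
    X k 0 ^ n * X k 1 ^ n -
      ((X k 0 * X k 1) ^ n +
        (n.choose 2 : k) • (ringComm (X k 0) (X k 1) * X k 0 ^ (n-1) * X k 1 ^ (n-1))) ∈
      T3 k := by
  obtain ⟨m, rfl⟩ : ∃ m, n = m + 2 := ⟨n - 2, by omega⟩
  rw [show m + 2 - 1 = m + 1 from by omega]
  rw [Nat.cast_smul_eq_nsmul, nsmul_eq_mul]
  set W := X k 0 ^ (m+2) * X k 1 ^ (m+2) -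
      ((X k 0 * X k 1) ^ (m+2) +
        (((m+2).choose 2 : ℕ) : F k) * (ringComm (X k 0) (X k 1) * X k 0 ^ (m+1) * X k 1 ^ (m+1)))
    with hW
  have hq : ((W : F k) : (rc k).Quotient) = 0 := by
    rw [hW]
    simp only [ringComm, RingCon.coe_sub, RingCon.coe_add, RingCon.coe_mul, RingCon.coe_pow,
      RingCon.coe_natCast]
    rw [sub_eq_zero,
      lemP (Hquot k) ((X k 0 : F k) : (rc k).Quotient) ((X k 1 : F k) : (rc k).Quotient) m]
    noncomm_ring
  have hrc : (rc k) W 0 := by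
    rw [← RingCon.coe_zero (rc k)] at hq
    exact ((rc k).eq).mp hq
  have hmem : W - 0 ∈ T3 k := hrc
  simpa using hmem


end
end

section
/- Let k be a field of characteristic p ≠ 2, let α₁, α₂ be nonnegative integers, let v ∈ k₀⟨X⟩, and let u ∈ k₀⟨X⟩ be central modulo T⁽³⁾ (i.e., [w,u] ∈ T⁽³⁾ for all w ∈ k₀⟨X⟩). Then (α₁+1)·v·[x₁,x₂]·x₁^{α₁}·x₂^{α₂}·u ≡ [x₂,v]·x₁^{α₁+1}·x₂^{α₂}·u (mod S + T⁽³⁾). -/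
noncomputable section

variable (k : Type*) [Field k]

/-- The smallest T-space `Wˢ` of `k₀⟨X⟩` containing `W`: the linear span of all images
of elements of `W` under substitutions of arbitrary elements of `k₀⟨X⟩` for the
variables. -/
def Tspace0 (W : Set (F k)) : Submodule k (F k) :=
  Submodule.span k
    {y | ∃ σ : ℕ → F k, (∀ i, σ i ∈ A0 k) ∧ ∃ w ∈ W, y = FreeAlgebra.lift k σ w}

/-- `wₙ = ∏_{k=1}^{n} [x_{2k−1}, x_{2k}]·x_{2k−1}^{p−1}·x_{2k}^{p−1}` (an ordered
product; the factor indexed by `j` in the list corresponds to `k = j+1`). -/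
def wPoly (p n : ℕ) : F k :=
  ((List.range n).map (fun j =>
    ringComm (X k (2*j)) (X k (2*j+1)) * X k (2*j) ^ (p-1) * X k (2*j+1) ^ (p-1))).prod

/-- `S`: equal to `{[x₁,x₂]}ˢ` if `char k = 0`, and to `{[x₁,x₂]}ˢ + {wₙ : n ≥ 1}ˢ`
if `char k = p > 2`. -/
def Spoly (p : ℕ) : Submodule k (F k) :=
  Tspace0 k {ringComm (X k 0) (X k 1)} ⊔
    (if p = 0 then ⊥ else Tspace0 k {u | ∃ n, 1 ≤ n ∧ u = wPoly k p n})

-- ===== auxiliary lemmas =====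


lemma X_mem_A0 (i : ℕ) : X k i ∈ A0 k :=
  NonUnitalAlgebra.subset_adjoin k (Set.mem_range_self i)

lemma mul_pow_mem_A0 {a : F k} (ha : a ∈ A0 k) (i n : ℕ) : a * X k i ^ n ∈ A0 k := by
  induction n with
  | zero => simpa using ha
  | succ n ih => rw [pow_succ, ← mul_assoc]; exact mul_mem ih (X_mem_A0 k i)

lemma pow_mul_mem_A0 {a : F k} (ha : a ∈ A0 k) (i n : ℕ) : X k i ^ n * a ∈ A0 k := by
  induction n with
  | zero => simpa using ha
  | succ n ih => rw [pow_succ', mul_assoc]; exact mul_mem (X_mem_A0 k i) ih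

lemma pow_mem_A0 (i n : ℕ) : X k i ^ (n+1) ∈ A0 k := by
  induction n with
  | zero => simpa using X_mem_A0 k i
  | succ n ih => rw [pow_succ]; exact mul_mem ih (X_mem_A0 k i)

lemma t3_gen {a b c : F k} (ha : a ∈ A0 k) (hb : b ∈ A0 k) (hc : c ∈ A0 k) :
    ringComm (ringComm a b) c ∈ T3 k :=
  Submodule.subset_span ⟨a, ha, b, hb, c, hc, Or.inl rfl⟩

lemma t3_mul_left {a t : F k} (ha : a ∈ A0 k) (ht : t ∈ T3 k) : a * t ∈ T3 k := by
  induction ht using Submodule.span_induction with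
  | mem x hx =>
    obtain ⟨u, hu, v, hv, w, hw, h⟩ := hx
    apply Submodule.subset_span
    rcases h with rfl | ⟨b, hb, rfl⟩ | ⟨c, hc, rfl⟩ | ⟨b, hb, c, hc, rfl⟩
    · exact ⟨u, hu, v, hv, w, hw, Or.inr (Or.inl ⟨a, ha, rfl⟩)⟩
    · exact ⟨u, hu, v, hv, w, hw, Or.inr (Or.inl ⟨a * b, mul_mem ha hb, (mul_assoc a b _).symm⟩)⟩
    · exact ⟨u, hu, v, hv, w, hw, Or.inr (Or.inr (Or.inr ⟨a, ha, c, hc, (mul_assoc a _ c).symm⟩))⟩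
    · exact ⟨u, hu, v, hv, w, hw, Or.inr (Or.inr (Or.inr ⟨a * b, mul_mem ha hb, c, hc, by
        rw [mul_assoc a, mul_assoc a, mul_assoc]⟩))⟩
  | zero => simpa using (T3 k).zero_mem
  | add x y hx hy ihx ihy => rw [mul_add]; exact add_mem ihx ihy
  | smul r x hx ih => rw [mul_smul_comm]; exact Submodule.smul_mem _ r ih

lemma t3_mul_right {b t : F k} (ht : t ∈ T3 k) (hb : b ∈ A0 k) : t * b ∈ T3 k := by
  induction ht using Submodule.span_induction with
  | mem x hx =>
    obtain ⟨u, hu, v, hv, w, hw, h⟩ := hx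
    apply Submodule.subset_span
    rcases h with rfl | ⟨a, ha, rfl⟩ | ⟨c, hc, rfl⟩ | ⟨a, ha, c, hc, rfl⟩
    · exact ⟨u, hu, v, hv, w, hw, Or.inr (Or.inr (Or.inl ⟨b, hb, rfl⟩))⟩
    · exact ⟨u, hu, v, hv, w, hw, Or.inr (Or.inr (Or.inr ⟨a, ha, b, hb, rfl⟩))⟩
    · exact ⟨u, hu, v, hv, w, hw, Or.inr (Or.inr (Or.inl ⟨c * b, mul_mem hc hb, mul_assoc _ c b⟩))⟩
    · exact ⟨u, hu, v, hv, w, hw, Or.inr (Or.inr (Or.inr ⟨a, ha, c * b, mul_mem hc hb, by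
        rw [mul_assoc]⟩))⟩
  | zero => simpa using (T3 k).zero_mem
  | add x y hx hy ihx ihy => rw [add_mul]; exact add_mem ihx ihy
  | smul r x hx ih => rw [smul_mul_assoc]; exact Submodule.smul_mem _ r ih

lemma comm_mem_S (p : ℕ) {a b : F k} (ha : a ∈ A0 k) (hb : b ∈ A0 k) :
    ringComm a b ∈ Spoly k p := by
  apply Submodule.mem_sup_left
  apply Submodule.subset_span
  refine ⟨fun i => if i = 0 then a else b, fun i => by dsimp only; split <;> assumption,
    ringComm (X k 0) (X k 1), rfl, ?_⟩
  simp [ringComm, X, FreeAlgebra.lift_ι_apply]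

/-- Key inductive lemma: `[x₂, x₁^{m+1}] + (m+1)•([x₁,x₂]·x₁^m) ∈ T³`. -/
lemma Lmem (m : ℕ) :
    (X k 1 * X k 0 ^ (m+1) - X k 0 ^ (m+1) * X k 1) +
      ((m : k) + 1) • ((X k 0 * X k 1 - X k 1 * X k 0) * X k 0 ^ m) ∈ T3 k := by
  set x := X k 0
  set y := X k 1
  induction m with
  | zero =>
    have h : (y * x ^ (0+1) - x ^ (0+1) * y) +
        (((0:ℕ) : k) + 1) • ((x * y - y * x) * x ^ 0) = 0 := by
      simp only [Nat.cast_zero, zero_add, one_smul, pow_one, pow_zero, mul_one]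
      abel
    rw [h]; exact (T3 k).zero_mem
  | succ m ih =>
    have hgen : ringComm (ringComm y x) (x ^ (m+1)) ∈ T3 k :=
      t3_gen k (X_mem_A0 k 1) (X_mem_A0 k 0) (pow_mem_A0 k 0 m)
    have hmul : ((y * x ^ (m+1) - x ^ (m+1) * y) +
        ((m : k) + 1) • ((x * y - y * x) * x ^ m)) * x ∈ T3 k :=
      t3_mul_right k ih (X_mem_A0 k 0)
    have key : (y * x ^ (m+1+1) - x ^ (m+1+1) * y) +
        (((m+1 : ℕ) : k) + 1) • ((x * y - y * x) * x ^ (m+1)) =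
        ((y * x ^ (m+1) - x ^ (m+1) * y) +
          ((m : k) + 1) • ((x * y - y * x) * x ^ m)) * x -
        ringComm (ringComm y x) (x ^ (m+1)) := by
      have hM : ((m : k) + 1) • ((x * y - y * x) * x ^ m) * x =
          ((m : k) + 1) • ((x * y - y * x) * x ^ (m+1)) := by
        rw [smul_mul_assoc, mul_assoc, ← pow_succ]
      rw [add_mul, hM]
      push_cast
      rw [add_smul, one_smul]
      have hcore : (y * x ^ (m+1+1) - x ^ (m+1+1) * y) + ((x * y - y * x) * x ^ (m+1)) =
          (y * x ^ (m+1) - x ^ (m+1) * y) * x - ringComm (ringComm y x) (x ^ (m+1)) := by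
        simp only [ringComm]
        noncomm_ring
      calc (y * x ^ (m+1+1) - x ^ (m+1+1) * y) +
            (((m : k) + 1) • ((x * y - y * x) * x ^ (m+1)) + (x * y - y * x) * x ^ (m+1))
          = ((y * x ^ (m+1+1) - x ^ (m+1+1) * y) + ((x * y - y * x) * x ^ (m+1))) +
            ((m : k) + 1) • ((x * y - y * x) * x ^ (m+1)) := by abel
        _ = ((y * x ^ (m+1) - x ^ (m+1) * y) * x - ringComm (ringComm y x) (x ^ (m+1))) +
            ((m : k) + 1) • ((x * y - y * x) * x ^ (m+1)) := by rw [hcore]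
        _ = _ := by abel
    rw [key]
    exact sub_mem hmul hgen

/-- Pure ring identity used in the main theorem (z plays the role of `y^{α₂}`). -/
lemma core_id {A : Type*} [Ring A] (x1 y v u z : A) (hz : y * z = z * y) :
    -((y * v - v * y) * x1 * z * u) =
      -(y * (v * x1 * z * u) - (v * x1 * z * u) * y) +
        v * (y * x1 - x1 * y) * (z * u) + (v * x1 * z) * (y * u - u * y) := by
  have h0 : v * x1 * (y * z - z * y) * u = 0 := by rw [hz]; simp
  have h1 : -((y * v - v * y) * x1 * z * u) =
      (-(y * (v * x1 * z * u) - (v * x1 * z * u) * y) +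
        v * (y * x1 - x1 * y) * (z * u) + (v * x1 * z) * (y * u - u * y)) +
      v * x1 * (y * z - z * y) * u := by noncomm_ring
  rw [h1, h0, add_zero]

/-- Let k have characteristic p ≠ 2, α₁, α₂ ≥ 0, v ∈ k₀⟨X⟩, and u ∈ k₀⟨X⟩ central
modulo T⁽³⁾. Then (α₁+1)·v·[x₁,x₂]·x₁^{α₁}·x₂^{α₂}·u ≡ [x₂,v]·x₁^{α₁+1}·x₂^{α₂}·u
(mod S + T⁽³⁾). -/
theorem statement4 (p : ℕ) (hp : ringChar k = p) (hp2 : p ≠ 2)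
    (α₁ α₂ : ℕ) (v : F k) (hv : v ∈ A0 k) (u : F k) (hu : u ∈ A0 k)
    (hcentral : ∀ w ∈ A0 k, ringComm w u ∈ T3 k) :
    ((α₁ : k) + 1) • (v * ringComm (X k 0) (X k 1) * X k 0 ^ α₁ * X k 1 ^ α₂ * u) -
      ringComm (X k 1) v * X k 0 ^ (α₁+1) * X k 1 ^ α₂ * u ∈
      Spoly k p ⊔ T3 k := by
  set x := X k 0 with hxdef
  set y := X k 1 with hydef
  -- the three pieces
  set s : F k := -(ringComm y (v * x ^ (α₁+1) * y ^ α₂ * u)) with hs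
  set t₁ : F k := v * ((y * x ^ (α₁+1) - x ^ (α₁+1) * y) +
      ((α₁ : k) + 1) • ((x * y - y * x) * x ^ α₁)) * (y ^ α₂ * u) with ht1
  set t₂ : F k := (v * x ^ (α₁+1) * y ^ α₂) * ringComm y u with ht2
  have hsS : s ∈ Spoly k p :=
    neg_mem (comm_mem_S k p (X_mem_A0 k 1)
      (mul_mem (mul_pow_mem_A0 k (mul_pow_mem_A0 k hv 0 (α₁+1)) 1 α₂) hu))
  have ht1T : t₁ ∈ T3 k :=
    t3_mul_right k (t3_mul_left k hv (Lmem k α₁)) (pow_mul_mem_A0 k hu 1 α₂)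
  have ht2T : t₂ ∈ T3 k :=
    t3_mul_left k (mul_pow_mem_A0 k (mul_pow_mem_A0 k hv 0 (α₁+1)) 1 α₂)
      (hcentral y (X_mem_A0 k 1))
  have e1 : t₁ = v * (y * x ^ (α₁+1) - x ^ (α₁+1) * y) * (y ^ α₂ * u) +
      ((α₁ : k) + 1) • (v * ringComm x y * x ^ α₁ * y ^ α₂ * u) := by
    rw [ht1, mul_add, add_mul, mul_smul_comm, smul_mul_assoc]
    congr 1
    simp only [ringComm]
    noncomm_ring
  have e2 : -(ringComm y v * x ^ (α₁+1) * y ^ α₂ * u) =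
      s + v * (y * x ^ (α₁+1) - x ^ (α₁+1) * y) * (y ^ α₂ * u) + t₂ := by
    rw [hs, ht2]
    simp only [ringComm]
    exact core_id (x ^ (α₁+1)) y v u (y ^ α₂) (pow_mul_comm' y α₂).symm
  have h : ((α₁ : k) + 1) • (v * ringComm x y * x ^ α₁ * y ^ α₂ * u) -
      ringComm y v * x ^ (α₁+1) * y ^ α₂ * u = s + (t₁ + t₂) := by
    rw [e1, sub_eq_add_neg, e2]
    abel
  rw [h]
  exact Submodule.add_mem_sup hsS (add_mem ht1T ht2T)

end
end

section
/- Let k be a field of characteristic p ≠ 2. Every element of {[x₁,x₂]}ᵀ, the T-ideal of k₀⟨X⟩ generated by [x₁,x₂], is congruent modulo T⁽³⁾ to a linear combination of elements of the form w·∏_{r=1}^{s} [x_{j_{2r−1}}, x_{j_{2r}}]·x_{j_{2r−1}}^{β_{2r−1}}·x_{j_{2r}}^{β_{2r}}, where s ≥ 1, j₁ < j₂ < ⋯ < j_{2s}, all β_i ≥ 0, and either w is empty (the term is just the product of commutator factors) or w = ∏_{r=1}^{m} x_{i_r}^{α_r} with i₁ < i₂ < ⋯ < i_m, all α_r > 0,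 and {i₁,…,i_m} ∩ {j₁,…,j_{2s}} = ∅. -/
/-!
Modulo `T⁽³⁾` every commutator is central, so we may compute in the quotient of `k⟨X⟩` by the
ideal generated by all `[[u,v],w]`. There `[a,b][c,d] = -[a,c][b,d]`, so a product
`[a₁,a₂]⋯[a₂ₛ₋₁,a₂ₛ]` is alternating in its entries: it vanishes when a variable repeats and is
otherwise `±` the product with sorted indices. Reordering the letters of a word `w` in front of
such a product only produces terms with a shorter word and one more commutator, so induction on
the length of `w` brings `w·[x_{j₁},x_{j₂}]⋯` into the normal form of the statement. Finally,
`[u,v]` is a derivation in each argument, so the span of these products contains every `a[u,v]b`.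
-/

noncomputable section

variable (k : Type*) [Field k]

/-- The T-ideal `{[x₁,x₂]}ᵀ` of `k₀⟨X⟩`: the smallest T-space of `k₀⟨X⟩` that is also
a two-sided ideal of `k₀⟨X⟩` and contains `[x₁,x₂]`.  Concretely it is the span of all
substitution instances `[u,v]` (`u,v ∈ k₀⟨X⟩`) together with their products with
elements of `k₀⟨X⟩` on either side. -/
def commTIdeal : Submodule k (F k) := Submodule.span k
  {x | ∃ u ∈ A0 k, ∃ v ∈ A0 k,
    x = ringComm u v ∨
    (∃ a ∈ A0 k, x = a * ringComm u v) ∨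
    (∃ b ∈ A0 k, x = ringComm u v * b) ∨
    (∃ a ∈ A0 k, ∃ b ∈ A0 k, x = a * ringComm u v * b)}

/-- The beginning `∏_{r=1}^{t} x_{i_r}^{α_r}` of an `SS`-element, encoded by the list
`bs = [(i₁,α₁),…,(i_t,α_t)]` of (index, exponent) pairs. -/
def begProd (bs : List (ℕ × ℕ)) : F k := (bs.map (fun q => X k q.1 ^ q.2)).prod

/-- The end `∏_{r=1}^{s} [x_{j_{2r-1}},x_{j_{2r}}]·x_{j_{2r-1}}^{β_{2r-1}}·x_{j_{2r}}^{β_{2r}}`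
of an `SS`-element, encoded by the list of pairs `((j_{2r-1},β_{2r-1}),(j_{2r},β_{2r}))`. -/
def endProd (es : List ((ℕ × ℕ) × (ℕ × ℕ))) : F k :=
  (es.map (fun q =>
    ringComm (X k q.1.1) (X k q.2.1) * X k q.1.1 ^ q.1.2 * X k q.2.1 ^ q.2.2)).prod

/-- The list `j₁, j₂, …, j_{2s}` of variable indices occurring in the end. -/
def endIdx : List ((ℕ × ℕ) × (ℕ × ℕ)) → List ℕ
  | [] => []
  | q :: t => q.1.1 :: q.2.1 :: endIdx t

/-- The side conditions defining membership in the set `SS`: not both parts empty,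
beginning indices `i₁ < ⋯ < i_t` strictly increasing with all exponents `α_r ≥ 1`,
end indices `j₁ < ⋯ < j_{2s}` strictly increasing, and the two index sets disjoint
(all exponents `β_r ≥ 0` is automatic in `ℕ`). -/
def SSElt (bs : List (ℕ × ℕ)) (es : List ((ℕ × ℕ) × (ℕ × ℕ))) : Prop :=
  (bs ≠ [] ∨ es ≠ []) ∧ List.Chain' (· < ·) (bs.map Prod.fst) ∧ (∀ q ∈ bs, 1 ≤ q.2) ∧
    List.Chain' (· < ·) (endIdx es) ∧ ∀ q ∈ bs, q.1 ∉ endIdx es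


class CommutatorsCentral (A : Type*) [Ring A] : Prop where
  lie_lie_eq_zero : ∀ a b c : A, ⁅⁅a, b⁆, c⁆ = 0

namespace CommutatorsCentral

variable {A : Type*} [Ring A] [CommutatorsCentral A]

theorem commute_lie (a b c : A) : Commute ⁅a, b⁆ c :=
  commute_iff_lie_eq.mpr (lie_lie_eq_zero a b c)

theorem lie_mul_lie_eq_neg (a b c d : A) : ⁅a, b⁆ * ⁅c, d⁆ = -(⁅a, c⁆ * ⁅b, d⁆) := by
  have key : ⁅a, b⁆ * ⁅c, d⁆ + ⁅b, d⁆ * ⁅a, c⁆ =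
      ⁅⁅a, b * c⁆, d⁆ - b * ⁅⁅a, c⁆, d⁆ - ⁅⁅a, b⁆, d⁆ * c := by
    simp only [Ring.lie_def]; noncomm_ring
  rw [lie_lie_eq_zero, lie_lie_eq_zero, lie_lie_eq_zero, mul_zero, zero_mul, sub_zero, sub_zero,
    (commute_lie b d _).eq] at key
  exact eq_neg_of_add_eq_zero_left key

end CommutatorsCentral

open CommutatorsCentral

/-- Lists of odd length give `0`, which makes `pairProd` alternating without a parity hypothesis. -/
def pairProd {A : Type*} [Ring A] : List A → A
  | a :: b :: t => ⁅a, b⁆ * pairProd t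
  | [_] => 0
  | [] => 1

section PairProd

variable {A : Type*} [Ring A]

theorem pairProd_eq_zero_of_odd : ∀ {l : List A}, Odd l.length → pairProd l = 0
  | [_], _ => rfl
  | _ :: _ :: t, h => by
    rw [pairProd, pairProd_eq_zero_of_odd (l := t) (by simpa [parity_simps] using h), mul_zero]

variable [CommutatorsCentral A]

theorem pairProd_append_swap : ∀ (p q : List A) (a b : A),
    pairProd (p ++ b :: a :: q) = -pairProd (p ++ a :: b :: q)
  | [], q, a, b => by
    rw [List.nil_append, List.nil_append, pairProd, pairProd, Ring.lie_def, Ring.lie_def, ← neg_sub,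
      neg_mul]
  | [_], [], _, _ => by simp [pairProd]
  | [c], d :: q, a, b => by
    simp only [List.singleton_append, pairProd, ← mul_assoc, lie_mul_lie_eq_neg c b, neg_mul]
  | c :: c' :: p, q, a, b => by
    simp [pairProd, pairProd_append_swap p q a b]

theorem pairProd_append_perm {l l' : List A} (h : l.Perm l') (p : List A) :
    pairProd (p ++ l') = pairProd (p ++ l) ∨ pairProd (p ++ l') = -pairProd (p ++ l) := by
  induction h generalizing p with
  | nil => exact Or.inl rfl
  | cons x _ ih => simpa using ih (p ++ [x])
  | swap x y l => exact Or.inr (pairProd_append_swap p l y x)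
  | trans _ _ ih₁ ih₂ =>
    rcases ih₁ p with h₁ | h₁ <;> rcases ih₂ p with h₂ | h₂ <;> simp [h₁, h₂]

theorem pairProd_perm {l l' : List A} (h : l.Perm l') :
    pairProd l' = pairProd l ∨ pairProd l' = -pairProd l :=
  pairProd_append_perm h []

theorem pairProd_eq_zero_of_not_nodup {l : List A} (h : ¬l.Nodup) : pairProd l = 0 := by
  obtain ⟨a, ha⟩ : ∃ a, [a, a].Sublist l := by simpa [List.nodup_iff_sublist] using h
  obtain ⟨t, ht⟩ := ha.exists_perm_append
  rcases pairProd_perm ht.symm with h' | h' <;> simpa [pairProd, Ring.lie_def] using h'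

end PairProd

theorem count_flatMap_replicate {α : Type*} [DecidableEq α] (w : List α) (a : α) :
    ∀ {L : List α}, L.Nodup →
      (L.flatMap fun i => List.replicate (w.count i) i).count a = if a ∈ L then w.count a else 0
  | [], _ => rfl
  | i :: L, h => by
    rw [List.nodup_cons] at h
    rw [List.flatMap_cons, List.count_append, count_flatMap_replicate w a h.2, List.count_replicate]
    by_cases hai : i = a
    · subst hai; simp [h.1]
    · simp [hai, Ne.symm hai]

theorem flatMap_replicate_count_perm {α : Type*} [DecidableEq α] {L w : List α} (hL : L.Nodup)
    (hw : ∀ a ∈ w, a ∈ L) :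
    (L.flatMap fun i => List.replicate (w.count i) i).Perm w := by
  refine List.perm_iff_count.mpr fun a => ?_
  rw [count_flatMap_replicate w a hL]
  split_ifs with ha
  · rfl
  · exact (List.count_eq_zero.mpr fun h => ha (hw a h)).symm

/-- `normalForm (X k) bs es` is `begProd k bs * endProd k es`, evaluated in an arbitrary ring. -/
def normalForm {A : Type*} [Ring A] (y : ℕ → A) (bs : List (ℕ × ℕ))
    (es : List ((ℕ × ℕ) × (ℕ × ℕ))) : A :=
  (bs.map fun q => y q.1 ^ q.2).prod *
    (es.map fun q => ⁅y q.1.1, y q.2.1⁆ * y q.1.1 ^ q.1.2 * y q.2.1 ^ q.2.2).prod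

def pairUp (c : ℕ → ℕ) : List ℕ → List ((ℕ × ℕ) × (ℕ × ℕ))
  | i :: j :: t => ((i, c i), (j, c j)) :: pairUp c t
  | _ => []

theorem endIdx_pairUp (c : ℕ → ℕ) : ∀ {s : List ℕ}, Even s.length → endIdx (pairUp c s) = s
  | [], _ => rfl
  | [_], h => absurd h (by simp)
  | _ :: _ :: t, h => by
    rw [pairUp, endIdx, endIdx_pairUp c (s := t) (by simpa [parity_simps] using h)]

theorem flatMap_pairUp (c : ℕ → ℕ) : ∀ {s : List ℕ}, Even s.length →
    (pairUp c s).flatMap (fun q => List.replicate q.1.2 q.1.1 ++ List.replicate q.2.2 q.2.1) =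
      s.flatMap fun i => List.replicate (c i) i
  | [], _ => rfl
  | [_], h => absurd h (by simp)
  | _ :: _ :: t, h => by
    simp [pairUp, flatMap_pairUp c (s := t) (by simpa [parity_simps] using h)]

theorem pairUp_ne_nil (c : ℕ → ℕ) {s : List ℕ} (hev : Even s.length) (hne : s ≠ []) :
    pairUp c s ≠ [] := by
  match s, hev, hne with
  | [_], hev, _ => exact absurd hev (by simp)
  | _ :: _ :: _, _, _ => simp [pairUp]


section NormalForm

variable {A : Type*} [Ring A] (y : ℕ → A)

theorem prod_map_pow_eq (bs : List (ℕ × ℕ)) :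
    (bs.map fun q => y q.1 ^ q.2).prod =
      ((bs.flatMap fun q => List.replicate q.2 q.1).map y).prod := by
  induction bs with
  | nil => rfl
  | cons q t ih => simp [ih]

variable [CommutatorsCentral A]

theorem prod_map_lie_mul_pow_mul_pow (es : List ((ℕ × ℕ) × (ℕ × ℕ))) :
    (es.map fun q => ⁅y q.1.1, y q.2.1⁆ * y q.1.1 ^ q.1.2 * y q.2.1 ^ q.2.2).prod =
      ((es.flatMap fun q => List.replicate q.1.2 q.1.1 ++ List.replicate q.2.2 q.2.1).map y).prod *
        pairProd ((endIdx es).map y) := by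
  induction es with
  | nil => simp [endIdx, pairProd]
  | cons q t ih =>
    simp only [List.map_cons, List.prod_cons, ih, List.flatMap_cons, List.map_append,
      List.prod_append, List.map_replicate, List.prod_replicate, endIdx, pairProd]
    simp only [mul_assoc]
    rw [(commute_lie _ _ _).left_comm, (commute_lie _ _ _).left_comm,
      (commute_lie _ _ _).left_comm]

theorem normalForm_eq (bs : List (ℕ × ℕ)) (es : List ((ℕ × ℕ) × (ℕ × ℕ))) :
    normalForm y bs es =
      ((bs.flatMap (fun q => List.replicate q.2 q.1) ++
        es.flatMap fun q => List.replicate q.1.2 q.1.1 ++ List.replicate q.2.2 q.2.1).map y).prod *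
        pairProd ((endIdx es).map y) := by
  rw [normalForm, prod_map_pow_eq, prod_map_lie_mul_pow_mul_pow, List.map_append, List.prod_append,
    mul_assoc]

theorem exists_normalForm_eq (w : List ℕ) {s : List ℕ} (hs : s.IsChain (· < ·))
    (hev : Even s.length) (hne : s ≠ []) :
    ∃ bs es, ∃ w' : List ℕ, SSElt bs es ∧ es ≠ [] ∧ w'.Perm w ∧
      normalForm y bs es = (w'.map y).prod * pairProd (s.map y) := by
  -- The beginning consists of the letters of `w` outside `s`; every exponent is the
  -- multiplicity of its letter in `w`.
  obtain ⟨b, hb, hbmem⟩ : ∃ b : List ℕ, b.IsChain (· < ·) ∧ ∀ i, i ∈ b ↔ i ∈ w ∧ i ∉ s :=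
    ⟨(w.toFinset.filter (· ∉ s)).sort, (Finset.sortedLT_sort _).isChain, by simp⟩
  have hes := pairUp_ne_nil w.count hev hne
  refine ⟨b.map fun i => (i, w.count i), pairUp w.count s,
    (b ++ s).flatMap fun i => List.replicate (w.count i) i, ⟨Or.inr hes, ?_, ?_, ?_, ?_⟩, hes, ?_,
    ?_⟩
  · show List.IsChain _ _
    simpa [List.map_map, Function.comp_def] using hb
  · simp only [List.mem_map]
    rintro _ ⟨i, hi, rfl⟩
    exact List.count_pos_iff.mpr ((hbmem i).mp hi).1
  · rwa [endIdx_pairUp _ hev]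
  · simp only [List.mem_map, endIdx_pairUp _ hev]
    rintro _ ⟨i, hi, rfl⟩
    exact ((hbmem i).mp hi).2
  · refine flatMap_replicate_count_perm ?_ fun a ha => ?_
    · refine List.nodup_append.mpr ⟨hb.sortedLT.nodup, hs.sortedLT.nodup, ?_⟩
      intro i hi j hj hij
      exact ((hbmem i).mp hi).2 (hij ▸ hj)
    · by_cases has : a ∈ s
      · exact List.mem_append_right _ has
      · exact List.mem_append_left _ ((hbmem a).mpr ⟨ha, has⟩)
  · rw [normalForm_eq, List.flatMap_map, flatMap_pairUp _ hev, endIdx_pairUp _ hev,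
      List.flatMap_append]

end NormalForm

section Span

open Submodule

variable (R : Type*) {A : Type*} [CommRing R] [Ring A] [Algebra R A] (y : ℕ → A)

def normalSpan : Submodule R A :=
  span R {u | ∃ bs es, SSElt bs es ∧ es ≠ [] ∧ u = normalForm y bs es}

def shortWordSpan (n : ℕ) : Submodule R A :=
  span R {x | ∃ w l : List ℕ, w.length < n ∧ l ≠ [] ∧ x = (w.map y).prod * pairProd (l.map y)}

theorem mul_mem_shortWordSpan (i : ℕ) {n : ℕ} {x : A} (hx : x ∈ shortWordSpan R y n) :
    y i * x ∈ shortWordSpan R y (n + 1) := by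
  suffices shortWordSpan R y n ≤ (shortWordSpan R y (n + 1)).comap (LinearMap.mulLeft R (y i)) from
    this hx
  refine span_le.mpr ?_
  rintro _ ⟨w, l, hw, hl, rfl⟩
  exact subset_span ⟨i :: w, l, by simpa using hw, hl, by simp [mul_assoc]⟩

variable [CommutatorsCentral A]

theorem word_mul_pairProd_sub_mem_shortWordSpan {w w' : List ℕ} (h : w.Perm w') (l : List ℕ) :
    (w.map y).prod * pairProd (l.map y) - (w'.map y).prod * pairProd (l.map y) ∈
      shortWordSpan R y w.length := by
  induction h with
  | nil => simp
  | cons i _ ih => simpa [mul_assoc, ← mul_sub] using mul_mem_shortWordSpan R y i ih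
  | swap i j w =>
    refine subset_span ⟨w, j :: i :: l, by simp, by simp, ?_⟩
    simp only [List.map_cons, List.prod_cons, pairProd, ← sub_mul, ← mul_assoc]
    rw [← (commute_lie (y j) (y i) _).eq, Ring.lie_def, sub_mul]
  | trans h₁ _ ih₁ ih₂ =>
    rw [← h₁.length_eq] at ih₂
    simpa using add_mem ih₁ ih₂

theorem word_mul_pairProd_mem_normalSpan (w l : List ℕ) (hl : l ≠ []) :
    (w.map y).prod * pairProd (l.map y) ∈ normalSpan R y := by
  induction hn : w.length using Nat.strong_induction_on generalizing w l with
  | _ n ih =>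
  by_cases hnd : l.Nodup
  swap
  · rw [pairProd_eq_zero_of_not_nodup fun h => hnd (h.of_map y), mul_zero]
    exact zero_mem _
  rcases Nat.even_or_odd l.length with hev | hodd
  swap
  · rw [pairProd_eq_zero_of_odd (by simpa using hodd), mul_zero]
    exact zero_mem _
  have hsl : l.toFinset.sort.Perm l :=
    (Finset.sort_perm_toList _ _).trans (List.toFinset_toList hnd)
  obtain ⟨bs, es, w', hSS, hes, hw', hnf⟩ := exists_normalForm_eq y w
    (Finset.sortedLT_sort _).isChain (hsl.length_eq ▸ hev)
    fun h => hl (h ▸ hsl).symm.eq_nil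
  have hshort : shortWordSpan R y n ≤ normalSpan R y := by
    refine span_le.mpr ?_
    rintro _ ⟨v, l', hv, hl', rfl⟩
    exact ih _ hv v l' hl' rfl
  have hsorted : (w.map y).prod * pairProd (l.toFinset.sort.map y) ∈ normalSpan R y := by
    have hdiff := word_mul_pairProd_sub_mem_shortWordSpan R y hw'.symm l.toFinset.sort
    rw [← hnf, hn] at hdiff
    rw [← sub_add_cancel ((w.map y).prod * _) (normalForm y bs es)]
    exact add_mem (hshort hdiff) (subset_span ⟨bs, es, hSS, hes, rfl⟩)
  rcases pairProd_perm (hsl.map y) with h | h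
  · rwa [h]
  · rw [h, mul_neg]
    exact neg_mem hsorted

theorem generator_mul_mem_normalSpan (i : ℕ) {x : A} (hx : x ∈ normalSpan R y) :
    y i * x ∈ normalSpan R y := by
  suffices normalSpan R y ≤ (normalSpan R y).comap (LinearMap.mulLeft R (y i)) from this hx
  refine span_le.mpr ?_
  rintro _ ⟨bs, es, -, hes, rfl⟩
  have hidx : endIdx es ≠ [] := by
    obtain _ | ⟨q, t⟩ := es
    exacts [absurd rfl hes, List.cons_ne_nil _ _]
  show y i * _ ∈ normalSpan R y
  rw [normalForm_eq, ← mul_assoc, ← List.prod_cons, ← List.map_cons]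
  exact word_mul_pairProd_mem_normalSpan R y _ _ hidx

variable {y}

theorem mul_mem_normalSpan (hy : Algebra.adjoin R (Set.range y) = ⊤) (a : A) {x : A}
    (hx : x ∈ normalSpan R y) : a * x ∈ normalSpan R y := by
  have ha : a ∈ Algebra.adjoin R (Set.range y) := hy ▸ Algebra.mem_top
  induction ha using Algebra.adjoin_induction generalizing x with
  | mem _ h =>
    obtain ⟨i, rfl⟩ := h
    exact generator_mul_mem_normalSpan R y i hx
  | algebraMap r =>
    rw [← Algebra.smul_def]
    exact smul_mem _ r hx
  | add a b _ _ ha hb =>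
    rw [add_mul]
    exact add_mem (ha hx) (hb hx)
  | mul a b _ _ ha hb =>
    rw [mul_assoc]
    exact ha (hb hx)

theorem lie_generator_mem_normalSpan (hy : Algebra.adjoin R (Set.range y) = ⊤) (i : ℕ) (v : A) :
    ⁅y i, v⁆ ∈ normalSpan R y := by
  have hv : v ∈ Algebra.adjoin R (Set.range y) := hy ▸ Algebra.mem_top
  induction hv using Algebra.adjoin_induction with
  | mem _ h =>
    obtain ⟨j, rfl⟩ := h
    simpa [pairProd] using word_mul_pairProd_mem_normalSpan R y [] [i, j] (by simp)
  | algebraMap r =>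
    rw [(Algebra.commute_algebraMap_right r (y i)).lie_eq]
    exact zero_mem _
  | add a b _ _ ha hb =>
    rw [show ⁅y i, a + b⁆ = ⁅y i, a⁆ + ⁅y i, b⁆ by simp only [Ring.lie_def]; noncomm_ring]
    exact add_mem ha hb
  | mul a b _ _ ha hb =>
    rw [show ⁅y i, a * b⁆ = b * ⁅y i, a⁆ + a * ⁅y i, b⁆ by
      rw [← (commute_lie (y i) a b).eq]; simp only [Ring.lie_def]; noncomm_ring]
    exact add_mem (mul_mem_normalSpan R hy b ha) (mul_mem_normalSpan R hy a hb)

theorem lie_mem_normalSpan (hy : Algebra.adjoin R (Set.range y) = ⊤) (u v : A) :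
    ⁅u, v⁆ ∈ normalSpan R y := by
  have hu : u ∈ Algebra.adjoin R (Set.range y) := hy ▸ Algebra.mem_top
  induction hu using Algebra.adjoin_induction with
  | mem _ h =>
    obtain ⟨i, rfl⟩ := h
    exact lie_generator_mem_normalSpan R hy i v
  | algebraMap r =>
    rw [(Algebra.commute_algebraMap_left r v).lie_eq]
    exact zero_mem _
  | add a b _ _ ha hb =>
    rw [show ⁅a + b, v⁆ = ⁅a, v⁆ + ⁅b, v⁆ by simp only [Ring.lie_def]; noncomm_ring]
    exact add_mem ha hb
  | mul a b _ _ ha hb =>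
    rw [show ⁅a * b, v⁆ = a * ⁅b, v⁆ + b * ⁅a, v⁆ by
      rw [← (commute_lie a v b).eq]; simp only [Ring.lie_def]; noncomm_ring]
    exact add_mem (mul_mem_normalSpan R hy a hb) (mul_mem_normalSpan R hy b ha)

theorem mul_lie_mul_mem_normalSpan (hy : Algebra.adjoin R (Set.range y) = ⊤) (a u v b : A) :
    a * ⁅u, v⁆ * b ∈ normalSpan R y := by
  rw [mul_assoc, (commute_lie u v b).eq, ← mul_assoc]
  exact mul_mem_normalSpan R hy _ (lie_mem_normalSpan R hy u v)

end Span

theorem map_normalForm {A B G : Type*} [Ring A] [Ring B] [FunLike G A B] [RingHomClass G A B]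
    (φ : G) (y : ℕ → A) (bs : List (ℕ × ℕ)) (es : List ((ℕ × ℕ) × (ℕ × ℕ))) :
    φ (normalForm y bs es) = normalForm (φ ∘ y) bs es := by
  simp [normalForm, map_list_prod, List.map_map, Function.comp_def, Ring.lie_def]

theorem smul_one_add_lie {R A : Type*} [CommRing R] [Ring A] [Algebra R A] (c : R) (u v : A) :
    ⁅c • 1 + u, v⁆ = ⁅u, v⁆ := by
  simp only [Ring.lie_def, add_mul, mul_add, smul_mul_assoc, mul_smul_comm, one_mul, mul_one]
  abel

theorem lie_smul_one_add {R A : Type*} [CommRing R] [Ring A] [Algebra R A] (c : R) (u v : A) :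
    ⁅u, c • 1 + v⁆ = ⁅u, v⁆ := by
  simp only [Ring.lie_def, add_mul, mul_add, smul_mul_assoc, mul_smul_comm, one_mul, mul_one]
  abel

section FreeAlgebra

open Submodule

variable {k}

theorem exists_eq_smul_one_add (f : F k) : ∃ c : k, ∃ a ∈ A0 k, f = c • 1 + a := by
  induction f using FreeAlgebra.induction with
  | grade0 r => exact ⟨r, 0, zero_mem _, by rw [add_zero, Algebra.algebraMap_eq_smul_one]⟩
  | grade1 i => exact ⟨0, _, NonUnitalAlgebra.subset_adjoin k ⟨i, rfl⟩, by rw [zero_smul, zero_add]⟩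
  | mul x y hx hy =>
    obtain ⟨c, a, ha, rfl⟩ := hx
    obtain ⟨d, b, hb, rfl⟩ := hy
    refine ⟨c * d, c • b + d • a + a * b,
      add_mem (add_mem (SMulMemClass.smul_mem c hb) (SMulMemClass.smul_mem d ha)) (mul_mem ha hb),
      ?_⟩
    simp only [add_mul, mul_add, smul_mul_assoc, mul_smul_comm, one_mul, mul_one, smul_add,
      smul_smul, mul_comm d c]
    abel
  | add x y hx hy =>
    obtain ⟨c, a, ha, rfl⟩ := hx
    obtain ⟨d, b, hb, rfl⟩ := hy
    exact ⟨c + d, a + b, add_mem ha hb, by rw [add_smul]; abel⟩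

theorem mul_lie_lie_mul_mem_T3 (a u v w b : F k) : a * ⁅⁅u, v⁆, w⁆ * b ∈ T3 k := by
  obtain ⟨-, u, hu, rfl⟩ := exists_eq_smul_one_add u
  obtain ⟨-, v, hv, rfl⟩ := exists_eq_smul_one_add v
  obtain ⟨-, w, hw, rfl⟩ := exists_eq_smul_one_add w
  obtain ⟨c, a, ha, rfl⟩ := exists_eq_smul_one_add a
  obtain ⟨d, b, hb, rfl⟩ := exists_eq_smul_one_add b
  simp only [smul_one_add_lie, lie_smul_one_add]
  have hT3 : ∀ x, (x = ringComm (ringComm u v) w ∨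
      (∃ a ∈ A0 k, x = a * ringComm (ringComm u v) w) ∨
      (∃ b ∈ A0 k, x = ringComm (ringComm u v) w * b) ∨
      (∃ a ∈ A0 k, ∃ b ∈ A0 k, x = a * ringComm (ringComm u v) w * b)) → x ∈ T3 k :=
    fun x hx => subset_span ⟨u, hu, v, hv, w, hw, hx⟩
  have expand : (c • 1 + a) * ⁅⁅u, v⁆, w⁆ * (d • 1 + b) = (c * d) • ⁅⁅u, v⁆, w⁆ +
      c • (⁅⁅u, v⁆, w⁆ * b) + d • (a * ⁅⁅u, v⁆, w⁆) + a * ⁅⁅u, v⁆, w⁆ * b := by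
    simp only [add_mul, mul_add, smul_mul_assoc, mul_smul_comm, one_mul, mul_one, smul_add,
      smul_smul, mul_comm d c]
    abel
  rw [expand]
  refine add_mem (add_mem (add_mem ?_ ?_) ?_) ?_
  · exact smul_mem _ _ (hT3 _ (Or.inl rfl))
  · exact smul_mem _ _ (hT3 _ (Or.inr (Or.inr (Or.inl ⟨b, hb, rfl⟩))))
  · exact smul_mem _ _ (hT3 _ (Or.inr (Or.inl ⟨a, ha, rfl⟩)))
  · exact hT3 _ (Or.inr (Or.inr (Or.inr ⟨a, ha, b, hb, rfl⟩)))

variable (k) in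
def T3Ideal : TwoSidedIdeal (F k) := TwoSidedIdeal.span {x | ∃ u v w : F k, x = ⁅⁅u, v⁆, w⁆}

theorem mem_T3_of_mem_T3Ideal {x : F k} (hx : x ∈ T3Ideal k) : x ∈ T3 k := by
  rw [T3Ideal, TwoSidedIdeal.mem_span_iff_mem_addSubgroup_closure] at hx
  refine (AddSubgroup.closure_le (K := (T3 k).toAddSubgroup)).mpr ?_ hx
  rintro _ ⟨_, ⟨a, -, _, ⟨u, v, w, rfl⟩, rfl⟩, b, -, rfl⟩
  exact mul_lie_lie_mul_mem_T3 a u v w b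

variable (k) in
abbrev QuotT3 : Type _ := (T3Ideal k).ringCon.Quotient

variable (k) in
def quotT3 : F k →ₐ[k] QuotT3 k := (T3Ideal k).ringCon.mkₐ k

theorem quotT3_surjective : Function.Surjective (quotT3 k) := RingCon.mkₐ_surjective _

theorem quotT3_eq_iff {f g : F k} : quotT3 k f = quotT3 k g ↔ f - g ∈ T3Ideal k :=
  ((T3Ideal k).ringCon.eq).trans ((T3Ideal k).rel_iff f g)

instance : CommutatorsCentral (QuotT3 k) where
  lie_lie_eq_zero a b c := by
    obtain ⟨u, rfl⟩ := quotT3_surjective a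
    obtain ⟨v, rfl⟩ := quotT3_surjective b
    obtain ⟨w, rfl⟩ := quotT3_surjective c
    have h : quotT3 k ⁅⁅u, v⁆, w⁆ = quotT3 k 0 :=
      quotT3_eq_iff.mpr (by rw [sub_zero]; exact TwoSidedIdeal.subset_span ⟨u, v, w, rfl⟩)
    simpa [Ring.lie_def] using h

theorem adjoin_range_quotT3_X : Algebra.adjoin k (Set.range (quotT3 k ∘ X k)) = ⊤ := by
  rw [Set.range_comp, ← AlgHom.map_adjoin,
    show Set.range (X k) = Set.range (FreeAlgebra.ι k) from rfl,
    FreeAlgebra.adjoin_range_ι, Algebra.map_top, AlgHom.range_eq_top]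
  exact quotT3_surjective

theorem normalSpan_le_map :
    normalSpan k (quotT3 k ∘ X k) ≤ (span k {u | ∃ bs es, SSElt bs es ∧ es ≠ [] ∧
      u = begProd k bs * endProd k es}).map (quotT3 k).toLinearMap := by
  refine span_le.mpr ?_
  rintro _ ⟨bs, es, hSS, hes, rfl⟩
  exact ⟨_, subset_span ⟨bs, es, hSS, hes, rfl⟩, map_normalForm (quotT3 k) (X k) bs es⟩

end FreeAlgebra

theorem statement5 :
    ∀ f ∈ commTIdeal k,
      f ∈ Submodule.span k
            {u | ∃ bs es, SSElt bs es ∧ es ≠ [] ∧ u = begProd k bs * endProd k es} ⊔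
          T3 k := by
  intro f hf
  set N := Submodule.span k
    {u | ∃ bs es, SSElt bs es ∧ es ≠ [] ∧ u = begProd k bs * endProd k es}
  have hgen (a u v b : F k) : quotT3 k (a * ringComm u v * b) ∈ N.map (quotT3 k).toLinearMap :=
    normalSpan_le_map (by
      simpa [Ring.lie_def, ringComm] using mul_lie_mul_mem_normalSpan k adjoin_range_quotT3_X
        (quotT3 k a) (quotT3 k u) (quotT3 k v) (quotT3 k b))
  have hmap : commTIdeal k ≤ (N.map (quotT3 k).toLinearMap).comap (quotT3 k).toLinearMap := by
    refine Submodule.span_le.mpr ?_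
    rintro _ ⟨u, -, v, -, rfl | ⟨a, -, rfl⟩ | ⟨b, -, rfl⟩ | ⟨a, -, b, -, rfl⟩⟩
    · simpa using hgen 1 u v 1
    · simpa using hgen a u v 1
    · simpa using hgen 1 u v b
    · exact hgen a u v b
  obtain ⟨g, hg, hfg⟩ := Submodule.mem_map.mp (hmap hf)
  rw [← sub_add_cancel f g]
  exact Submodule.add_mem _ (Submodule.mem_sup_right (mem_T3_of_mem_T3Ideal
    (quotT3_eq_iff.mp hfg.symm))) (Submodule.mem_sup_left hg)

end
end
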